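/- arXiv:1506.03944 — 2 statements merged into one kernel-verified Lean document; each statement's English description precedes it below -/
import Mathlib

section
/- Let V ⊊ [n], let Σ = (x_0,…,x_m) be an arbitrary ordering of [n]∖V, and let 𝒜 = (A_1|…|A_k) be a prefix in V. (1) If 𝒜 is not full, then the standard matching M_Σ restricts to a perfect matching of the graph Γ_n(V,𝒜). (2) If 𝒜 is full, then M_Σ restricts to a near-perfect matching of Γ_n(V,𝒜), whose unique critical vertex is (A_1|…|A_k|{x_0}|…|{x_m}). -/
open Finset

/-- union of a list of finsets -/
def lunion {α : Type*} [DecidableEq α] (L : List (Finset α)) : Finset α := L.foldr (· ∪ ·) ∅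

/-- `IsOSP A L` : `L` is an ordered set partition of the finite set `A`. -/
def IsOSP {α : Type*} [DecidableEq α] (A : Finset α) (L : List (Finset α)) : Prop :=
  (∀ B ∈ L, B.Nonempty) ∧ L.Pairwise (fun B C => Disjoint B C) ∧ lunion L = A

/-- `seenBlk L x` = `A_1 ∪ … ∪ A_{i(x)}`, the union of the blocks of `L` up to and
including the block containing `x`. -/
def seenBlk {α : Type*} [DecidableEq α] : List (Finset α) → α → Finset α
  | [], _ => ∅
  | A :: rest, x => if x ∈ A then A else A ∪ seenBlk rest x

/-- rank (1-based position in the increasing order) of `x` in the finset `S`. -/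
def rankIn (S : Finset ℕ) (x : ℕ) : ℕ := (S.filter (fun y => y ≤ x)).card

/-- the set `F(σ)` of flippable colors, for an ordered set partition of `[n] = {0,…,n}` -/
def Fset (n : ℕ) (L : List (Finset ℕ)) : Finset ℕ :=
  match L.getLast? with
  | some A => if A.card = 1 then Finset.range (n+1) \ A else Finset.range (n+1)
  | none => Finset.range (n+1)

/-- the flip `F(σ,x)` of an ordered set partition with respect to the color `x` -/
def flipOSP (x : ℕ) : List (Finset ℕ) → List (Finset ℕ)
  | [] => []
  | A :: rest =>
    if x ∈ A then
      if 2 ≤ A.card then {x} :: A.erase x :: rest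
      else
        match rest with
        | [] => [A]
        | B :: rest' => insert x B :: rest'
    else A :: flipOSP x rest

def levelAux : List ℕ → List (Finset ℕ) → Option ℕ
  | [], _ => none
  | _ :: _, [] => none
  | x :: xs, A :: As => if A = {x} then levelAux xs As else some x

/-- `levelFn Σ σ` = `level(σ,Σ)` (as an `Option`; `none` = undefined). -/
def levelFn (Sig : List ℕ) (L : List (Finset ℕ)) : Option ℕ :=
  levelAux Sig.reverse L.reverse

/-- ordered set partitions of `[n] = {0,…,n}` -/
def OSPn (n : ℕ) : Type := {L : List (Finset ℕ) // IsOSP (Finset.range (n+1)) L}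

/-- the graph `Γ_n`: vertices are the ordered set partitions of `[n]`, with `σ` and
`F(σ,x)` joined by an edge for every `x ∈ F(σ)`. -/
def Gamma (n : ℕ) : SimpleGraph (OSPn n) where
  Adj σ τ := σ ≠ τ ∧
    ((∃ x ∈ Fset n σ.1, τ.1 = flipOSP x σ.1) ∨ (∃ x ∈ Fset n τ.1, σ.1 = flipOSP x τ.1))
  symm := ⟨fun σ τ h => ⟨h.1.symm, h.2.symm⟩⟩
  loopless := ⟨fun σ h => h.1 rfl⟩

/-- a matching: a set of edges of `G`, no two of which share a vertex -/
def IsMatchingSet {V : Type*} (G : SimpleGraph V) (M : Set (Sym2 V)) : Prop :=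
  (∀ e ∈ M, e ∈ G.edgeSet) ∧ ∀ e ∈ M, ∀ f ∈ M, ∀ v : V, v ∈ e → v ∈ f → e = f

/-- a vertex is critical w.r.t. `M` if it lies in no edge of `M` -/
def CriticalVx {V : Type*} (M : Set (Sym2 V)) (v : V) : Prop := ∀ e ∈ M, v ∉ e

/-- the standard matching `M_Σ`, as a set of edges of `Γ_n` -/
def MSigma (n : ℕ) (Sig : List ℕ) : Set (Sym2 (OSPn n)) :=
  {e | ∃ σ τ : OSPn n, ∃ x, levelFn Sig σ.1 = some x ∧ τ.1 = flipOSP x σ.1 ∧ e = s(σ, τ)}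

/-- a list of edges is alternating w.r.t. `M` -/
def Alternates {V : Type*} (M : Set (Sym2 V)) (es : List (Sym2 V)) : Prop :=
  es.Chain' (fun e f => e ∈ M ↔ f ∉ M)

def IsProperlyAlternating {V : Type*} {G : SimpleGraph V} (M : Set (Sym2 V)) {u v : V}
    (p : G.Walk u v) : Prop :=
  Alternates M p.edges ∧
  (∀ e, p.edges.head? = some e → e ∉ M → CriticalVx M u) ∧
  (∀ e, p.edges.getLast? = some e → e ∉ M → CriticalVx M v)

def IsSemiAugmenting {V : Type*} {G : SimpleGraph V} (M : Set (Sym2 V)) {u v : V}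
    (p : G.Walk u v) : Prop :=
  IsProperlyAlternating M p ∧
  (∃ e, p.edges.head? = some e ∧ e ∈ M) ∧ (∃ e, p.edges.getLast? = some e ∧ e ∉ M)

def IsNonAugmenting {V : Type*} {G : SimpleGraph V} (M : Set (Sym2 V)) {u v : V}
    (p : G.Walk u v) : Prop :=
  Alternates M p.edges ∧
  (∃ e, p.edges.head? = some e ∧ e ∈ M) ∧ (∃ e, p.edges.getLast? = some e ∧ e ∈ M)

def IsWeaklySemiAugmenting {V : Type*} {G : SimpleGraph V} (M : Set (Sym2 V)) {u v : V}
    (p : G.Walk u v) : Prop :=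
  Alternates M p.edges ∧
  (p.edges = [] ∨
    ((∃ e, p.edges.head? = some e ∧ e ∈ M) ∧ (∃ e, p.edges.getLast? = some e ∧ e ∉ M)))

/-- a partial ordered set partition, as a list of pairs of blocks `(A_i, B_i)` -/
abbrev RawPOSP := List (Finset ℕ × Finset ℕ)

def carrierP (σ : RawPOSP) : Finset ℕ := (σ.map Prod.fst).foldr (· ∪ ·) ∅
def colorsP (σ : RawPOSP) : Finset ℕ := (σ.map Prod.snd).foldr (· ∪ ·) ∅

/-- `σ` is a partial ordered set partition of `[n] = {0,…,n}` -/
def IsPOSP (n : ℕ) (σ : RawPOSP) : Prop :=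
  σ ≠ [] ∧ (∀ p ∈ σ, p.2.Nonempty ∧ p.2 ⊆ p.1 ∧ p.1 ⊆ Finset.range (n+1)) ∧
  (σ.map Prod.fst).Pairwise (fun A B => Disjoint A B)

/-- view an ordered set partition as a partial one, with `B_i = A_i` -/
def toPairs (L : List (Finset ℕ)) : RawPOSP := L.map (fun A => (A, A))

def dlAux (S : Finset ℕ) : Finset ℕ → RawPOSP → RawPOSP
  | _, [] => []
  | acc, (A, B) :: rest =>
    if B ⊆ S then dlAux S (acc ∪ A) rest
    else (acc ∪ A, B \ S) :: dlAux S ∅ rest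

/-- the deletion `dl(σ, S)` -/
def dl (σ : RawPOSP) (S : Finset ℕ) : RawPOSP := dlAux S ∅ σ

/-- `D(σ, S)` = `A_i ∪ … ∪ A_t` for the minimal `i` with `B_i ∪ … ∪ B_t ⊆ S`, else `∅` -/
def Dfun (S : Finset ℕ) : RawPOSP → Finset ℕ
  | [] => ∅
  | b :: rest => if colorsP (b :: rest) ⊆ S then carrierP (b :: rest) else Dfun S rest

def nodesAux : Finset ℕ → RawPOSP → Finset (Finset ℕ × ℕ)
  | _, [] => ∅
  | acc, (A, B) :: rest => B.image (fun x => (acc ∪ A, x)) ∪ nodesAux (acc ∪ A) rest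

/-- the node set `V(σ)` of a partial ordered set partition -/
def nodesP (σ : RawPOSP) : Finset (Finset ℕ × ℕ) := nodesAux ∅ σ

/-- an ordered set partition of the whole of `[n]`, viewed as a partial one -/
def IsFullOSP (n : ℕ) (σ : RawPOSP) : Prop :=
  IsPOSP n σ ∧ carrierP σ = Finset.range (n+1) ∧ ∀ p ∈ σ, p.2 = p.1

/-- simplices of the standard chromatic subdivision `χ(Δⁿ)` -/
def IsSimplexChi (n : ℕ) (W : Finset (Finset ℕ × ℕ)) : Prop :=
  ∃ σ : RawPOSP, IsFullOSP n σ ∧ W ⊆ nodesP σ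

/-- a linked tuple of partial ordered set partitions -/
def Linked (T : List RawPOSP) : Prop := T.Chain' (fun σ τ => colorsP σ = carrierP τ)

/-- vertices of `χ^d(Δⁿ)`: linked `d`-tuples whose last entry has a singleton color set -/
def IsVertexChi (n d : ℕ) (v : List RawPOSP) : Prop :=
  v.length = d ∧ (∀ σ ∈ v, IsPOSP n σ) ∧ Linked v ∧ (colorsP (v.getLastD [])).card = 1

/-- the `n`-simplices of `χ^d(Δⁿ)`: linked `d`-tuples of ordered set partitions of `[n]` -/
def IsTopSimplexChi (n d : ℕ) (T : List RawPOSP) : Prop :=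
  T.length = d ∧ Linked T ∧
  ∀ σ ∈ T, IsPOSP n σ ∧ carrierP σ = Finset.range (n+1) ∧ ∀ p ∈ σ, p.2 = p.1

def faceAux : Finset ℕ → List RawPOSP → List RawPOSP
  | _, [] => []
  | S, σ :: rest => dl σ S :: faceAux (Dfun S σ) rest

/-- the face of the simplex `T` of `χ^d(Δⁿ)` determined by `S_d = S`:
`(dl(σ_1,S_1),…,dl(σ_d,S_d))` with `S_i = D(σ_{i+1},S_{i+1})`. -/
def faceT (T : List RawPOSP) (S : Finset ℕ) : List RawPOSP := (faceAux S T.reverse).reverse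

/-- the vertex of the `n`-simplex `T` colored `x` -/
def vertexOf (T : List RawPOSP) (x : ℕ) : List RawPOSP :=
  faceT T ((colorsP (T.getLastD [])) \ {x})

/-- relabel all elements by `f` -/
def relabel (f : ℕ → ℕ) (T : List RawPOSP) : List RawPOSP :=
  T.map (fun σ => σ.map (fun p => (p.1.image f, p.2.image f)))

/-- the unique order preserving bijection `I → J` (extended by the identity) -/
noncomputable def oMap (I J : Finset ℕ) (h : I.card = J.card) (x : ℕ) : ℕ :=
  if hx : x ∈ I then ((J.orderIsoOfFin h.symm) ((I.orderIsoOfFin rfl).symm ⟨x, hx⟩) : ℕ)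
  else x

/-- a compliant binary labeling of the vertices of `χ^d(Δⁿ)` -/
def Compliant (n d : ℕ) (lab : List RawPOSP → Bool) : Prop :=
  ∀ I J : Finset ℕ, I ⊆ Finset.range (n+1) → J ⊆ Finset.range (n+1) →
    ∀ h : I.card = J.card, ∀ v : List RawPOSP, IsVertexChi n d v →
      carrierP v.headI ⊆ I → lab (relabel (oMap I J h) v) = lab v

/-- the number of ordered set partitions of `[n] = {0,…,n}` -/
noncomputable def fOSP (n : ℕ) : ℕ :=
  Nat.card {L : List (Finset ℕ) // IsOSP (Finset.range (n+1)) L}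

/-- membership in the vertex set of `Γ_n(V)` -/
def InGammaV (V : Finset ℕ) (L : List (Finset ℕ)) : Prop :=
  ∃ A rest, L = A :: rest ∧ ¬ A ⊆ V

/-- a prefix in `V`: a tuple of nonempty pairwise disjoint subsets of `V` -/
def IsPrefixIn {α : Type*} [DecidableEq α] (V : Finset α) (P : List (Finset α)) : Prop :=
  (∀ A ∈ P, A.Nonempty ∧ A ⊆ V) ∧ P.Pairwise (fun A B => Disjoint A B)

/-- membership in the vertex set of `Γ_n(V,𝒜)` -/
def InGammaVA (V : Finset ℕ) (P : List (Finset ℕ)) (L : List (Finset ℕ)) : Prop :=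
  ∃ A rest, L = P ++ A :: rest ∧ ¬ A ⊆ V

/-- conducting bipartite graph of the first type -/
def ConductingFirst {V : Type*} (G : SimpleGraph V) (A B : Set V) : Prop :=
  A.ncard = B.ncard + 1 ∧
  ∀ v ∈ A, ∃ M : Set (Sym2 V), IsMatchingSet G M ∧ ∀ u, CriticalVx M u ↔ u = v

/-- conducting bipartite graph of the second type -/
def ConductingSecond {V : Type*} (G : SimpleGraph V) (A B : Set V) : Prop :=
  A.ncard = B.ncard ∧
  ∀ v ∈ A, ∀ w ∈ B, ∃ M : Set (Sym2 V), IsMatchingSet G M ∧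
    ∀ u, CriticalVx M u ↔ (u = v ∨ u = w)

/-- the vertex of the `n`-simplex `(As ‖ Bs)` of `χ²(Δⁿ)` colored `x` is internal -/
def InternalVx (n : ℕ) (As Bs : List (Finset ℕ)) (x : ℕ) : Prop :=
  carrierP (dl (toPairs As) (Finset.range (n+1) \ seenBlk Bs x)) = Finset.range (n+1)

/-!
Blocks of the prefix lie in `V` while every element of `Σ` lies outside `V`, so a flip at a
level `x ∈ Σ` leaves the prefix alone and the first block after it still contains `x` or is
unchanged; hence it never leaves `Γ_n(V,𝒜)`. The level is undefined only if `σ` and the tail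
`{x_0}|…|{x_m}` are suffixes of one another; since `σ` covers `[n] ⊇ Σ` and `Σ` has no repetitions,
`σ` then ends with that tail. The blocks in front of the tail meet no `x_i`, so they lie in `V`,
and comparing with the first block of `σ` not contained in `V` shows that they are exactly `𝒜`,
which is therefore full.
-/

section lunion

variable {α : Type*} [DecidableEq α]

@[simp] lemma lunion_nil : lunion ([] : List (Finset α)) = ∅ := rfl

@[simp] lemma lunion_cons (A : Finset α) (L : List (Finset α)) :
    lunion (A :: L) = A ∪ lunion L := rfl

@[simp] lemma lunion_append (L M : List (Finset α)) :
    lunion (L ++ M) = lunion L ∪ lunion M := by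
  induction L with
  | nil => simp
  | cons A L ih => simp [ih, union_assoc]

lemma mem_lunion {x : α} {L : List (Finset α)} : x ∈ lunion L ↔ ∃ A ∈ L, x ∈ A := by
  induction L with
  | nil => simp
  | cons A L ih => simp [ih]

@[simp] lemma lunion_map_singleton (l : List α) :
    lunion (l.map fun y => ({y} : Finset α)) = l.toFinset := by
  induction l with
  | nil => rfl
  | cons a l ih => rw [List.map_cons, lunion_cons, ih, List.toFinset_cons, insert_eq]

lemma disjoint_lunion_right {A : Finset α} {L : List (Finset α)} :
    Disjoint A (lunion L) ↔ ∀ B ∈ L, Disjoint A B := by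
  induction L with
  | nil => simp
  | cons B L ih => simp [ih]

lemma isOSP_lunion_cons_iff {A : Finset α} {L : List (Finset α)} :
    IsOSP (lunion (A :: L)) (A :: L) ↔
      A.Nonempty ∧ Disjoint A (lunion L) ∧ IsOSP (lunion L) L := by
  simp only [IsOSP, List.mem_cons, forall_eq_or_imp, List.pairwise_cons,
    disjoint_lunion_right, and_true]
  tauto

end lunion

lemma List.eq_of_append_cons_eq_append {α : Type*} (p : α → Bool) {P Q rest tail : List α}
    {A : α} (h : P ++ A :: rest = Q ++ tail) (hP : ∀ B ∈ P, p B) (hA : ¬ p A)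
    (hQ : ∀ B ∈ Q, p B) (htail : ∀ C ∈ tail, ¬ p C) : P = Q := by
  have := congrArg (List.takeWhile p) h
  rwa [takeWhile_append_of_pos hP, takeWhile_append_of_pos hQ, takeWhile_cons_of_neg hA,
    takeWhile_eq_nil_iff.2 fun hl => htail _ (List.getElem_mem hl), append_nil, append_nil]
    at this

lemma eq_singleton_of_mem_of_card_lt_two {α : Type*} {A : Finset α} {x : α} (hx : x ∈ A)
    (h : ¬ 2 ≤ A.card) : A = {x} :=
  eq_singleton_iff_unique_mem.2 ⟨hx, fun y hy => card_le_one.1 (by omega) y hy x hx⟩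

lemma lunion_flipOSP (x : ℕ) (L : List (Finset ℕ)) : lunion (flipOSP x L) = lunion L := by
  induction L with
  | nil => rfl
  | cons A rest ih =>
    unfold flipOSP
    split_ifs with hxA h2
    · simp [← union_assoc, insert_erase hxA]
    · obtain rfl := eq_singleton_of_mem_of_card_lt_two hxA h2
      cases rest with
      | nil => rfl
      | cons B rest' => simp only [lunion_cons, insert_eq, union_assoc]
    · simp [ih]

lemma isOSP_lunion_flipOSP (x : ℕ) :
    ∀ {L : List (Finset ℕ)}, IsOSP (lunion L) L → IsOSP (lunion (flipOSP x L)) (flipOSP x L)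
  | [], h => h
  | A :: rest, h => by
    obtain ⟨hA, hdisj, hrest⟩ := isOSP_lunion_cons_iff.1 h
    unfold flipOSP
    split_ifs with hxA h2
    · refine isOSP_lunion_cons_iff.2 ⟨singleton_nonempty x, ?_, isOSP_lunion_cons_iff.2
        ⟨?_, hdisj.mono_left (erase_subset x A), hrest⟩⟩
      · simpa using disjoint_left.1 hdisj hxA
      · rw [← card_pos, card_erase_of_mem hxA]; omega
    · obtain rfl := eq_singleton_of_mem_of_card_lt_two hxA h2
      cases rest with
      | nil => exact h
      | cons B rest' =>
        obtain ⟨hB, hBdisj, hrest'⟩ := isOSP_lunion_cons_iff.1 hrest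
        refine isOSP_lunion_cons_iff.2 ⟨insert_nonempty x B, disjoint_insert_left.2 ⟨?_, hBdisj⟩,
          hrest'⟩
        exact fun hx => disjoint_singleton_left.1 hdisj (mem_union_right B hx)
    · exact isOSP_lunion_cons_iff.2 ⟨hA, by rwa [lunion_flipOSP], isOSP_lunion_flipOSP x hrest⟩

lemma IsOSP.flipOSP {S : Finset ℕ} {L : List (Finset ℕ)} (h : IsOSP S L) (x : ℕ) :
    IsOSP S (flipOSP x L) := by
  obtain rfl := h.2.2
  simpa only [lunion_flipOSP] using isOSP_lunion_flipOSP x h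

lemma flipOSP_append {x : ℕ} {P L : List (Finset ℕ)} (h : ∀ A ∈ P, x ∉ A) :
    flipOSP x (P ++ L) = P ++ flipOSP x L := by
  induction P with
  | nil => rfl
  | cons A P ih =>
    simp only [List.cons_append, flipOSP, if_neg (h A List.mem_cons_self),
      ih fun B hB => h B (List.mem_cons_of_mem A hB)]

lemma exists_flipOSP_cons_eq (x : ℕ) (A : Finset ℕ) (rest : List (Finset ℕ)) :
    ∃ B rest', flipOSP x (A :: rest) = B :: rest' ∧ (B = A ∨ x ∈ B) := by
  unfold flipOSP
  split_ifs
  · exact ⟨_, _, rfl, .inr (mem_singleton_self x)⟩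
  · cases rest with
    | nil => exact ⟨_, _, rfl, .inl rfl⟩
    | cons B rest' => exact ⟨_, _, rfl, .inr (mem_insert_self x B)⟩
  · exact ⟨_, _, rfl, .inl rfl⟩

lemma levelAux_eq_none_iff : ∀ (xs : List ℕ) (As : List (Finset ℕ)),
    levelAux xs As = none ↔
      As <+: xs.map (fun y => ({y} : Finset ℕ)) ∨ xs.map (fun y => ({y} : Finset ℕ)) <+: As
  | [], As => by simp [levelAux]
  | _ :: _, [] => by simp [levelAux]
  | y :: ys, A :: As => by
    simp only [levelAux, List.map_cons, List.cons_prefix_cons]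
    split_ifs with hA
    · simp [hA, levelAux_eq_none_iff ys As]
    · simp [hA, eq_comm]

lemma mem_of_levelAux_eq_some : ∀ {xs : List ℕ} {As : List (Finset ℕ)} {x : ℕ},
    levelAux xs As = some x → x ∈ xs
  | [], _, _, h => by simp [levelAux] at h
  | _ :: _, [], _, h => by simp [levelAux] at h
  | y :: ys, A :: As, x, h => by
    simp only [levelAux] at h
    split_ifs at h
    · exact List.mem_cons_of_mem y (mem_of_levelAux_eq_some h)
    · simp_all

lemma levelFn_eq_none_iff {Sig : List ℕ} {L : List (Finset ℕ)} :
    levelFn Sig L = none ↔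
      L <:+ Sig.map (fun y => ({y} : Finset ℕ)) ∨ Sig.map (fun y => ({y} : Finset ℕ)) <:+ L := by
  rw [levelFn, levelAux_eq_none_iff, List.map_reverse, List.reverse_prefix, List.reverse_prefix]

lemma mem_of_levelFn_eq_some {Sig : List ℕ} {L : List (Finset ℕ)} {x : ℕ}
    (h : levelFn Sig L = some x) : x ∈ Sig :=
  List.mem_reverse.1 (mem_of_levelAux_eq_some h)


section GammaVA

variable {n : ℕ} {V : Finset ℕ} {Sig : List ℕ} {P L : List (Finset ℕ)}

lemma InGammaVA.flipOSP (hP : IsPrefixIn V P) {x : ℕ} (hx : x ∉ V) (h : InGammaVA V P L) :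
    InGammaVA V P (flipOSP x L) := by
  obtain ⟨A, rest, rfl, hAV⟩ := h
  obtain ⟨B, rest', hflip, hB⟩ := exists_flipOSP_cons_eq x A rest
  refine ⟨B, rest', by rw [flipOSP_append fun C hC hxC => hx ((hP.1 C hC).2 hxC), hflip], ?_⟩
  rcases hB with rfl | hxB
  · exact hAV
  · exact fun hBV => hx (hBV hxB)

lemma mem_range_sdiff_of_mem (hSig : Sig.toFinset = range (n + 1) \ V) {y : ℕ} (hy : y ∈ Sig) :
    y ∈ range (n + 1) \ V :=
  hSig ▸ List.mem_toFinset.2 hy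

lemma not_subset_of_mem_map_singleton (hSig : Sig.toFinset = range (n + 1) \ V) {C : Finset ℕ}
    (hC : C ∈ Sig.map fun y => ({y} : Finset ℕ)) : ¬ C ⊆ V := by
  obtain ⟨y, hy, rfl⟩ := List.mem_map.1 hC
  exact fun hyV => (mem_sdiff.1 (mem_range_sdiff_of_mem hSig hy)).2 (singleton_subset_iff.1 hyV)

lemma map_singleton_subset_of_isOSP (hSig : Sig.toFinset = range (n + 1) \ V)
    (hL : IsOSP (range (n + 1)) L) (h : L <:+ Sig.map fun y => ({y} : Finset ℕ)) :
    (Sig.map fun y => ({y} : Finset ℕ)) ⊆ L := by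
  intro B hB
  obtain ⟨y, hy, rfl⟩ := List.mem_map.1 hB
  obtain ⟨C, hC, hyC⟩ := mem_lunion.1 (hL.2.2 ▸ (mem_sdiff.1 (mem_range_sdiff_of_mem hSig hy)).1)
  obtain ⟨z, -, rfl⟩ := List.mem_map.1 (h.subset hC)
  rwa [mem_singleton.1 hyC]

lemma subset_of_mem_of_isOSP_append_map_singleton (hSig : Sig.toFinset = range (n + 1) \ V)
    (hL : IsOSP (range (n + 1)) (L ++ Sig.map fun y => ({y} : Finset ℕ))) :
    ∀ B ∈ L, B ⊆ V := by
  intro B hB b hbB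
  by_contra hbV
  have hb : b ∈ Sig := by
    rw [← List.mem_toFinset, hSig, mem_sdiff, ← hL.2.2]
    exact ⟨mem_lunion.2 ⟨B, List.mem_append_left _ hB, hbB⟩, hbV⟩
  have hdisj := (List.pairwise_append.1 hL.2.1).2.2 B hB {b} (List.mem_map_of_mem hb)
  exact disjoint_left.1 hdisj hbB (mem_singleton_self b)

lemma eq_append_map_singleton_of_levelFn_eq_none (hSig : Sig.toFinset = range (n + 1) \ V)
    (hnd : Sig.Nodup) (hP : IsPrefixIn V P) (hL : IsOSP (range (n + 1)) L)
    (hG : InGammaVA V P L) (h : levelFn Sig L = none) :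
    L = P ++ Sig.map fun y => ({y} : Finset ℕ) := by
  obtain ⟨front, rfl⟩ : (Sig.map fun y => ({y} : Finset ℕ)) <:+ L := by
    rcases levelFn_eq_none_iff.1 h with hLS | hSL
    · have hnd' := hnd.map singleton_injective
      rw [hLS.eq_of_length_le (hnd'.subperm (map_singleton_subset_of_isOSP hSig hL hLS)).length_le]
    · exact hSL
  obtain ⟨A, rest, hLP, hAV⟩ := hG
  rw [List.eq_of_append_cons_eq_append (fun B => decide (B ⊆ V)) hLP.symm
    (fun B hB => by simpa using (hP.1 B hB).2) (by simpa using hAV)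
    (fun B hB => by simpa using subset_of_mem_of_isOSP_append_map_singleton hSig hL B hB)
    (fun C hC => by simpa using not_subset_of_mem_map_singleton hSig hC)]

lemma lunion_eq_of_isOSP_append_map_singleton (hV : V ⊆ range (n + 1))
    (hSig : Sig.toFinset = range (n + 1) \ V) (hP : IsPrefixIn V P)
    (hL : IsOSP (range (n + 1)) (P ++ Sig.map fun y => ({y} : Finset ℕ))) : lunion P = V := by
  have hcover : range (n + 1) = lunion P ∪ (range (n + 1) \ V) := by
    rw [← hSig, ← lunion_map_singleton, ← lunion_append, hL.2.2]
  refine Subset.antisymm (fun v hv => ?_) (fun v hv => ?_)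
  · obtain ⟨B, hB, hvB⟩ := mem_lunion.1 hv
    exact (hP.1 B hB).2 hvB
  · have := hcover ▸ hV hv
    simpa [hv] using this

lemma isOSP_append_map_singleton (hV : V ⊆ range (n + 1))
    (hSig : Sig.toFinset = range (n + 1) \ V) (hnd : Sig.Nodup) (hP : IsPrefixIn V P)
    (hfull : lunion P = V) :
    IsOSP (range (n + 1)) (P ++ Sig.map fun y => ({y} : Finset ℕ)) := by
  refine ⟨?_, List.pairwise_append.2 ⟨hP.2, ?_, ?_⟩, ?_⟩
  · simp only [List.mem_append, List.mem_map]
    rintro B (hB | ⟨y, -, rfl⟩)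
    · exact (hP.1 B hB).1
    · exact singleton_nonempty y
  · exact List.pairwise_map.2 (hnd.imp disjoint_singleton.2)
  · intro B hB C hC
    obtain ⟨y, hy, rfl⟩ := List.mem_map.1 hC
    exact disjoint_singleton_right.2 fun hyB =>
      (mem_sdiff.1 (mem_range_sdiff_of_mem hSig hy)).2 ((hP.1 B hB).2 hyB)
  · rw [lunion_append, lunion_map_singleton, hfull, hSig, union_sdiff_of_subset hV]

lemma inGammaVA_append_map_singleton (hSig : Sig.toFinset = range (n + 1) \ V)
    (hne : Sig ≠ []) : InGammaVA V P (P ++ Sig.map fun y => ({y} : Finset ℕ)) := by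
  obtain ⟨y, ys, rfl⟩ := List.exists_cons_of_ne_nil hne
  exact ⟨{y}, _, rfl, not_subset_of_mem_map_singleton hSig List.mem_cons_self⟩

end GammaVA

/-- The Matching Lemma: for a prefix `𝒜` in `V ⊊ [n]` and `Σ` an ordering of `[n]∖V`,
the standard matching `M_Σ` restricts to a perfect matching of `Γ_n(V,𝒜)` if `𝒜` is
not full, and to a near-perfect matching with unique critical vertex
`(A_1|…|A_k|{x_0}|…|{x_m})` if `𝒜` is full. -/
theorem statement13 (n : ℕ) (V : Finset ℕ) (hV : V ⊂ Finset.range (n + 1))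
    (Sig : List ℕ) (hnd : Sig.Nodup)
    (hmem : ∀ y, y ∈ Sig ↔ y ∈ Finset.range (n + 1) \ V)
    (P : List (Finset ℕ)) (hP : IsPrefixIn V P) :
    (lunion P ≠ V → ∀ σ : OSPn n, InGammaVA V P σ.1 →
      ∃ x, levelFn Sig σ.1 = some x ∧
        IsOSP (Finset.range (n + 1)) (flipOSP x σ.1) ∧
        InGammaVA V P (flipOSP x σ.1)) ∧
    (lunion P = V →
      (IsOSP (Finset.range (n + 1)) (P ++ Sig.map (fun y => ({y} : Finset ℕ))) ∧
       InGammaVA V P (P ++ Sig.map (fun y => ({y} : Finset ℕ)))) ∧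
      ∀ σ : OSPn n, InGammaVA V P σ.1 →
        (levelFn Sig σ.1 = none ↔ σ.1 = P ++ Sig.map (fun y => ({y} : Finset ℕ))) ∧
        (σ.1 ≠ P ++ Sig.map (fun y => ({y} : Finset ℕ)) →
          ∃ x, levelFn Sig σ.1 = some x ∧
            IsOSP (Finset.range (n + 1)) (flipOSP x σ.1) ∧
            InGammaVA V P (flipOSP x σ.1))) := by
  have hSig : Sig.toFinset = range (n + 1) \ V := by
    ext y
    rw [List.mem_toFinset, hmem]
  have hflip : ∀ σ : OSPn n, InGammaVA V P σ.1 → levelFn Sig σ.1 ≠ none →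
      ∃ x, levelFn Sig σ.1 = some x ∧ IsOSP (range (n + 1)) (flipOSP x σ.1) ∧
        InGammaVA V P (flipOSP x σ.1) := by
    intro σ hσ hlev
    obtain ⟨x, hx⟩ := Option.ne_none_iff_exists'.1 hlev
    have hxV := (mem_sdiff.1 (mem_range_sdiff_of_mem hSig (mem_of_levelFn_eq_some hx))).2
    exact ⟨x, hx, σ.2.flipOSP x, hσ.flipOSP hP hxV⟩
  have hnone : ∀ σ : OSPn n, InGammaVA V P σ.1 → levelFn Sig σ.1 = none →
      σ.1 = P ++ Sig.map fun y => ({y} : Finset ℕ) :=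
    fun σ hσ => eq_append_map_singleton_of_levelFn_eq_none hSig hnd hP σ.2 hσ
  refine ⟨fun hne σ hσ => hflip σ hσ fun h => hne ?_, fun hfull => ⟨⟨?_, ?_⟩, fun σ hσ => ⟨⟨hnone σ hσ,
    fun h => levelFn_eq_none_iff.2 (.inr (h ▸ List.suffix_append _ _))⟩,
    fun hne => hflip σ hσ (mt (hnone σ hσ) hne)⟩⟩⟩
  · exact lunion_eq_of_isOSP_append_map_singleton hV.subset hSig hP (hnone σ hσ h ▸ σ.2)
  · exact isOSP_append_map_singleton hV.subset hSig hnd hP hfull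
  · obtain ⟨y, hy, hyV⟩ := exists_of_ssubset hV
    exact inGammaVA_append_map_singleton hSig (List.ne_nil_of_mem ((hmem y).2 (mem_sdiff.2 ⟨hy, hyV⟩)))
end

section
/- Let G be a bipartite graph with bipartition (A,B). (1) If M is a near-perfect matching of G with critical vertex v ∈ A such that for every other vertex w ∈ A there exists a semi-augmenting path from v to w, then G is conducting of the first type. (2) If M is a perfect matching of G such that for all vertices v ∈ A and w ∈ B there exists a non-augmenting path from v to w, then G is conducting of the second type. -/
open Finset

/-!
Let `S` be one side of the bipartition, so that every edge has exactly one end in `S`. Along an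
alternating walk that starts in `S` with a matched edge, an edge is matched exactly when it is
traversed out of `S`. This is a property of the individual darts, so it survives shortcutting the
walk to a path. Flipping the matching along such a path, two edges at a time from a critical end,
moves the critical vertex to the other end; for the second type one first deletes the initial
matched edge, which exposes both ends. The counting conditions hold because every matching edge
has exactly one end on each side.
-/

section

variable {V : Type*} {G : SimpleGraph V} {S : Set V} {M : Set (Sym2 V)}

theorem mem_iff_not_mem_of_adj {A B : Set V} (hdisj : ∀ v, ¬(v ∈ A ∧ v ∈ B))
    (hbip : ∀ u v, G.Adj u v → ((u ∈ A ∧ v ∈ B) ∨ (u ∈ B ∧ v ∈ A))) ⦃x y : V⦄ (h : G.Adj x y) :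
    x ∈ A ↔ y ∉ A := by
  have := hdisj x
  have := hdisj y
  rcases hbip x y h with ⟨hx, hy⟩ | ⟨hx, hy⟩ <;> tauto

theorem exists_mem_edge_mem_side (hS : ∀ ⦃x y⦄, G.Adj x y → (x ∈ S ↔ y ∉ S)) {e : Sym2 V}
    (he : e ∈ G.edgeSet) : ∃ u ∈ e, u ∈ S := by
  induction e using Sym2.ind with
  | h x y =>
    by_cases hx : x ∈ S
    · exact ⟨x, Sym2.mem_mk_left _ _, hx⟩
    · exact ⟨y, Sym2.mem_mk_right _ _, (hS he).not_left.mp hx⟩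

theorem eq_of_mem_edge_of_mem_side (hS : ∀ ⦃x y⦄, G.Adj x y → (x ∈ S ↔ y ∉ S)) {e : Sym2 V}
    (he : e ∈ G.edgeSet) {u w : V} (hu : u ∈ e) (hw : w ∈ e) (huS : u ∈ S) (hwS : w ∈ S) :
    u = w := by
  induction e using Sym2.ind with
  | h x y =>
    have hxy := hS he
    rcases Sym2.mem_iff.mp hu with rfl | rfl <;> rcases Sym2.mem_iff.mp hw with rfl | rfl <;>
      tauto

theorem Alternates.reverse {l : List (Sym2 V)} (h : Alternates M l) : Alternates M l.reverse :=
  List.isChain_reverse.mpr (h.imp fun e f hef => by tauto)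

theorem darts_mem_iff_of_alternates (hS : ∀ ⦃x y⦄, G.Adj x y → (x ∈ S ↔ y ∉ S)) :
    ∀ {a b : V} (p : G.Walk a b), Alternates M p.edges →
      (∀ e ∈ p.edges.head?, e ∈ M ↔ a ∈ S) → ∀ d ∈ p.darts, d.edge ∈ M ↔ d.fst ∈ S
  | _, _, .nil, _, _ => by simp
  | a, _, .cons (v := x) hax q, halt, hhead => by
    obtain ⟨halt_head, halt_q⟩ := List.isChain_cons.mp halt
    simp only [SimpleGraph.Walk.edges_cons, List.head?_cons, Option.mem_def, Option.some.injEq,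
      forall_eq'] at hhead
    simp only [SimpleGraph.Walk.darts_cons, List.mem_cons, forall_eq_or_imp,
      SimpleGraph.Dart.edge_mk]
    refine ⟨hhead, darts_mem_iff_of_alternates hS q halt_q fun e he => ?_⟩
    have halt_e : s(a, x) ∈ M ↔ e ∉ M := halt_head e he
    have hside := hS hax
    tauto

theorem exists_isPath_darts_of_alternates [DecidableEq V]
    (hS : ∀ ⦃x y⦄, G.Adj x y → (x ∈ S ↔ y ∉ S)) {a b : V} (p : G.Walk a b)
    (halt : Alternates M p.edges) (hhead : ∀ e ∈ p.edges.head?, e ∈ M ↔ a ∈ S) :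
    ∃ q : G.Walk a b, q.IsPath ∧ ∀ d ∈ q.darts, d.edge ∈ M ↔ d.fst ∈ S :=
  ⟨p.bypass, p.bypass_isPath, fun d hd =>
    darts_mem_iff_of_alternates hS p halt hhead d (p.darts_bypass_subset_darts hd)⟩

theorem IsMatchingSet.diff_singleton (hM : IsMatchingSet G M) {v x : V} (he : s(v, x) ∈ M) :
    IsMatchingSet G (M \ {s(v, x)}) ∧
      ∀ u, CriticalVx (M \ {s(v, x)}) u ↔ CriticalVx M u ∨ u = v ∨ u = x := by
  refine ⟨⟨fun e he' => hM.1 e he'.1, fun e he' f hf => hM.2 e he'.1 f hf.1⟩, fun u => ?_⟩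
  constructor
  · intro hu
    by_contra! h
    obtain ⟨hcrit, huv, hux⟩ := h
    obtain ⟨e, heM, hue⟩ : ∃ e ∈ M, u ∈ e := by simpa [CriticalVx] using hcrit
    refine hu e ⟨heM, fun hev => ?_⟩ hue
    rw [hev, Sym2.mem_iff] at hue
    exact hue.elim huv hux
  · rintro (hu | rfl | rfl) e ⟨heM, hne⟩ hue
    · exact hu e heM hue
    · exact hne (hM.2 e heM _ he _ hue (Sym2.mem_mk_left _ _))
    · exact hne (hM.2 e heM _ he _ hue (Sym2.mem_mk_right _ _))

theorem IsMatchingSet.swap (hM : IsMatchingSet G M) {a x y : V} (hax : G.Adj a x)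
    (hxy : s(x, y) ∈ M) (ha : CriticalVx M a) (hay : a ≠ y) :
    IsMatchingSet G (insert s(a, x) (M \ {s(x, y)})) ∧
      ∀ u, CriticalVx (insert s(a, x) (M \ {s(x, y)})) u ↔ (CriticalVx M u ∧ u ≠ a) ∨ u = y := by
  have hx : ∀ e ∈ M, x ∈ e → e = s(x, y) := fun e he hxe =>
    hM.2 e he _ hxy x hxe (Sym2.mem_mk_left _ _)
  have hy : ∀ e ∈ M, y ∈ e → e = s(x, y) := fun e he hye =>
    hM.2 e he _ hxy y hye (Sym2.mem_mk_right _ _)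
  have hxy' : x ≠ y := G.ne_of_adj (hM.1 _ hxy)
  have hnew : ∀ e ∈ M, e ≠ s(x, y) → ∀ u ∈ s(a, x), u ∉ e := by
    rintro e he hne u hu hue
    rcases Sym2.mem_iff.mp hu with rfl | rfl
    exacts [ha e he hue, hne (hx e he hue)]
  refine ⟨⟨?_, ?_⟩, fun u => ⟨fun hu => ?_, ?_⟩⟩
  · rintro e (rfl | ⟨he, -⟩)
    exacts [hax, hM.1 e he]
  · rintro e (rfl | ⟨he, hne⟩) f (rfl | ⟨hf, hnf⟩) u hue huf
    · rfl
    · exact (hnew f hf hnf u hue huf).elim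
    · exact (hnew e he hne u huf hue).elim
    · exact hM.2 e he f hf u hue huf
  · have hu' : u ∉ s(a, x) := hu _ (Set.mem_insert _ _)
    rw [Sym2.mem_iff, not_or] at hu'
    refine or_iff_not_imp_right.mpr fun huy => ⟨fun e he hue => ?_, hu'.1⟩
    by_cases hne : e = s(x, y)
    · subst hne
      rcases Sym2.mem_iff.mp hue with rfl | rfl
      exacts [hu'.2 rfl, huy rfl]
    · exact hu e (Set.mem_insert_of_mem _ ⟨he, hne⟩) hue
  · rintro (⟨hu, hua⟩ | rfl) e (rfl | ⟨he, hne⟩) hue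
    · rcases Sym2.mem_iff.mp hue with rfl | rfl
      exacts [hua rfl, hu _ hxy (Sym2.mem_mk_left _ _)]
    · exact hu e he hue
    · rcases Sym2.mem_iff.mp hue with h | h
      exacts [hay h.symm, hxy' h.symm]
    · exact hne (hy e he hue)

theorem IsMatchingSet.exists_shift_critical (hS : ∀ ⦃x y⦄, G.Adj x y → (x ∈ S ↔ y ∉ S)) :
    ∀ {M : Set (Sym2 V)} {a b : V} (p : G.Walk a b), IsMatchingSet G M → p.IsPath →
      (∀ d ∈ p.darts, d.edge ∈ M ↔ d.fst ∈ S) → CriticalVx M a → a ∉ S → b ∉ S →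
      ∃ M', IsMatchingSet G M' ∧ ∀ u, CriticalVx M' u ↔ (CriticalVx M u ∧ u ≠ a) ∨ u = b
  | M, a, _, .nil, hM, _, _, ha, _, _ =>
    ⟨M, hM, fun u => by by_cases hua : u = a <;> simp_all⟩
  | _, _, _, .cons hax .nil, _, _, _, _, haS, hbS => (hbS ((hS hax).not_left.mp haS)).elim
  | M, a, b, .cons (v := x) hax (.cons (v := y) hxy r), hM, hp, hd, ha, haS, hbS => by
    simp only [SimpleGraph.Walk.darts_cons, List.mem_cons, forall_eq_or_imp,
      SimpleGraph.Dart.edge_mk] at hd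
    obtain ⟨-, hd_xy, hd_r⟩ := hd
    simp only [SimpleGraph.Walk.cons_isPath_iff, SimpleGraph.Walk.support_cons,
      List.mem_cons, not_or] at hp
    obtain ⟨⟨hr, hxr⟩, -, har⟩ := hp
    have hxS : x ∈ S := (hS hax).not_left.mp haS
    have hxyM : s(x, y) ∈ M := hd_xy.mpr hxS
    obtain ⟨hM₂, hcrit₂⟩ := hM.swap hax hxyM ha fun h => har (h ▸ r.start_mem_support)
    have hd_r₂ : ∀ d ∈ r.darts, d.edge ∈ insert s(a, x) (M \ {s(x, y)}) ↔ d.fst ∈ S := by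
      intro d hd
      have hdr : d.edge ∈ r.edges := List.mem_map_of_mem hd
      have hne_ax : d.edge ≠ s(a, x) := fun h => har (r.fst_mem_support_of_mem_edges (h ▸ hdr))
      have hne_xy : d.edge ≠ s(x, y) := fun h => hxr (r.fst_mem_support_of_mem_edges (h ▸ hdr))
      simp [hne_ax, hne_xy, hd_r d hd]
    obtain ⟨M', hM', hcrit'⟩ := IsMatchingSet.exists_shift_critical hS r hM₂ hr hd_r₂
      ((hcrit₂ y).mpr (Or.inr rfl)) ((hS hxy).mp hxS) hbS
    refine ⟨M', hM', fun u => ?_⟩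
    have hy : CriticalVx M u → u ≠ y := by
      rintro hu rfl
      exact hu _ hxyM (Sym2.mem_mk_right _ _)
    rw [hcrit', hcrit₂]
    tauto

theorem IsMatchingSet.exists_expose_ends (hS : ∀ ⦃x y⦄, G.Adj x y → (x ∈ S ↔ y ∉ S))
    (hM : IsMatchingSet G M) {v w : V} (q : G.Walk v w) (hq : q.IsPath)
    (hd : ∀ d ∈ q.darts, d.edge ∈ M ↔ d.fst ∈ S) (hvS : v ∈ S) (hwS : w ∉ S) :
    ∃ M', IsMatchingSet G M' ∧ ∀ u, CriticalVx M' u ↔ CriticalVx M u ∨ u = v ∨ u = w := by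
  cases q with
  | nil => exact (hwS hvS).elim
  | cons hvx r =>
    rename_i x
    simp only [SimpleGraph.Walk.darts_cons, List.mem_cons, forall_eq_or_imp,
      SimpleGraph.Dart.edge_mk] at hd
    obtain ⟨hr, hvr⟩ := (SimpleGraph.Walk.cons_isPath_iff _ _).mp hq
    have hvxM : s(v, x) ∈ M := hd.1.mpr hvS
    obtain ⟨hM₁, hcrit₁⟩ := hM.diff_singleton hvxM
    have hd_r : ∀ d ∈ r.darts, d.edge ∈ M \ {s(v, x)} ↔ d.fst ∈ S := by
      intro d hdr
      have hdr' : d.edge ∈ r.edges := List.mem_map_of_mem hdr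
      have hne : d.edge ≠ s(v, x) := fun h => hvr (r.fst_mem_support_of_mem_edges (h ▸ hdr'))
      simp [hne, hd.2 d hdr]
    obtain ⟨M', hM', hcrit'⟩ := hM₁.exists_shift_critical hS r hr hd_r
      ((hcrit₁ x).mpr (by simp)) ((hS hvx).mp hvS) hwS
    refine ⟨M', hM', fun u => ?_⟩
    have hx : CriticalVx M u → u ≠ x := by
      rintro hu rfl
      exact hu _ hvxM (Sym2.mem_mk_right _ _)
    have hvx' : v ≠ x := G.ne_of_adj hvx
    rw [hcrit', hcrit₁]
    constructor
    · rintro (⟨h | h | h, hux⟩ | h) <;> simp_all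
    · rintro (h | rfl | rfl) <;> simp_all

theorem ncard_side_not_critical (hS : ∀ ⦃x y⦄, G.Adj x y → (x ∈ S ↔ y ∉ S))
    (hM : IsMatchingSet G M) : {u | u ∈ S ∧ ¬ CriticalVx M u}.ncard = M.ncard := by
  have hcov : ∀ u ∈ {u | u ∈ S ∧ ¬ CriticalVx M u}, ∃ e ∈ M, u ∈ e := fun u hu => by
    simpa [CriticalVx] using hu.2
  choose f hfM hfu using hcov
  refine Set.ncard_congr f hfM (fun u w hu hw huw => ?_) (fun e he => ?_)
  · exact eq_of_mem_edge_of_mem_side hS (hM.1 _ (hfM u hu)) (hfu u hu) (huw ▸ hfu w hw) hu.1 hw.1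
  · obtain ⟨u, hue, huS⟩ := exists_mem_edge_mem_side hS (hM.1 e he)
    have hu : u ∈ {u | u ∈ S ∧ ¬ CriticalVx M u} := ⟨huS, fun h => h e he hue⟩
    exact ⟨u, hu, hM.2 _ (hfM u hu) e he u (hfu u hu) hue⟩

theorem conductingFirst_of_semiAugmenting [Finite V] {A B : Set V} (hdisj : ∀ v, ¬(v ∈ A ∧ v ∈ B))
    (hbip : ∀ u v, G.Adj u v → ((u ∈ A ∧ v ∈ B) ∨ (u ∈ B ∧ v ∈ A))) {v : V}
    (hvA : v ∈ A) (hM : IsMatchingSet G M) (hcrit : ∀ u, CriticalVx M u ↔ u = v)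
    (hpaths : ∀ w ∈ A, w ≠ v → ∃ p : G.Walk w v, IsSemiAugmenting M p) :
    ConductingFirst G A B := by
  classical
  have hA := mem_iff_not_mem_of_adj hdisj hbip
  have hB := mem_iff_not_mem_of_adj (fun u h => hdisj u h.symm) fun x y h => (hbip x y h).symm
  refine ⟨?_, fun w hwA => ?_⟩
  · have hcovA : {u | u ∈ A ∧ ¬ CriticalVx M u} = A \ {v} := by ext; simp [hcrit]
    have hcovB : {u | u ∈ B ∧ ¬ CriticalVx M u} = B := by
      ext u
      simp only [hcrit, Set.mem_ofPred_eq, and_iff_left_iff_imp]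
      rintro hu rfl
      exact hdisj u ⟨hvA, hu⟩
    rw [← Set.ncard_sdiff_singleton_add_one hvA, ← hcovA, ← hcovB, ncard_side_not_critical hA hM,
      ncard_side_not_critical hB hM]
  by_cases hwv : w = v
  · exact ⟨M, hM, hwv ▸ hcrit⟩
  obtain ⟨p, ⟨halt, -, -⟩, -, e, hlast, heM⟩ := hpaths w hwA hwv
  obtain ⟨q, hq, hqd⟩ := exists_isPath_darts_of_alternates hB p.reverse
    (by rw [SimpleGraph.Walk.edges_reverse]; exact halt.reverse) fun e' he' => by
      rw [SimpleGraph.Walk.edges_reverse, List.head?_reverse, hlast, Option.mem_some_iff] at he'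
      subst he'
      exact iff_of_false heM fun h => hdisj v ⟨hvA, h⟩
  obtain ⟨M', hM', hcrit'⟩ := hM.exists_shift_critical hB q hq hqd ((hcrit v).mpr rfl)
    (fun h => hdisj v ⟨hvA, h⟩) fun h => hdisj w ⟨hwA, h⟩
  exact ⟨M', hM', fun u => by rw [hcrit', hcrit]; tauto⟩

theorem conductingSecond_of_nonAugmenting {A B : Set V} (hdisj : ∀ v, ¬(v ∈ A ∧ v ∈ B))
    (hbip : ∀ u v, G.Adj u v → ((u ∈ A ∧ v ∈ B) ∨ (u ∈ B ∧ v ∈ A)))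
    (hM : IsMatchingSet G M) (hperfect : ∀ u, ¬ CriticalVx M u)
    (hpaths : ∀ v ∈ A, ∀ w ∈ B, ∃ p : G.Walk v w, IsNonAugmenting M p) :
    ConductingSecond G A B := by
  classical
  have hA := mem_iff_not_mem_of_adj hdisj hbip
  have hB := mem_iff_not_mem_of_adj (fun u h => hdisj u h.symm) fun x y h => (hbip x y h).symm
  refine ⟨?_, fun v hvA w hwB => ?_⟩
  · have hcov : ∀ S : Set V, {u | u ∈ S ∧ ¬ CriticalVx M u} = S := fun S => by simp [hperfect]
    rw [← hcov A, ← hcov B, ncard_side_not_critical hA hM, ncard_side_not_critical hB hM]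
  obtain ⟨p, halt, ⟨e, hhead, heM⟩, -⟩ := hpaths v hvA w hwB
  obtain ⟨q, hq, hqd⟩ := exists_isPath_darts_of_alternates hA p halt fun e' he' => by
    rw [hhead, Option.mem_some_iff] at he'
    exact he' ▸ iff_of_true heM hvA
  obtain ⟨M', hM', hcrit'⟩ := hM.exists_expose_ends hA q hq hqd hvA fun h => hdisj w ⟨h, hwB⟩
  exact ⟨M', hM', fun u => by simp [hcrit', hperfect]⟩

end

theorem statement16_general {V : Type*} [Fintype V] (G : SimpleGraph V) (A B : Set V)
    (hdisj : ∀ v, ¬(v ∈ A ∧ v ∈ B))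
    (hbip : ∀ u v, G.Adj u v → ((u ∈ A ∧ v ∈ B) ∨ (u ∈ B ∧ v ∈ A))) :
    ((∃ (M : Set (Sym2 V)) (v : V), v ∈ A ∧ IsMatchingSet G M ∧
        (∀ u, CriticalVx M u ↔ u = v) ∧
        ∀ w ∈ A, w ≠ v → ∃ p : G.Walk w v, IsSemiAugmenting M p) →
      ConductingFirst G A B) ∧
    ((∃ M : Set (Sym2 V), IsMatchingSet G M ∧ (∀ u, ¬ CriticalVx M u) ∧
        ∀ v ∈ A, ∀ w ∈ B, ∃ p : G.Walk v w, IsNonAugmenting M p) →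
      ConductingSecond G A B) :=
  ⟨fun ⟨_, _, hvA, hM, hcrit, hpaths⟩ =>
      conductingFirst_of_semiAugmenting hdisj hbip hvA hM hcrit hpaths,
    fun ⟨_, hM, hperfect, hpaths⟩ =>
      conductingSecond_of_nonAugmenting hdisj hbip hM hperfect hpaths⟩

/-- Sufficient conditions, via systems of semi-augmenting (resp. non-augmenting) paths,
for a bipartite graph to be conducting of the first (resp. second) type. -/
theorem statement16 {V : Type*} [Fintype V] (G : SimpleGraph V) (A B : Set V)
    (hcover : ∀ v, v ∈ A ∨ v ∈ B) (hdisj : ∀ v, ¬(v ∈ A ∧ v ∈ B))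
    (hbip : ∀ u v, G.Adj u v → ((u ∈ A ∧ v ∈ B) ∨ (u ∈ B ∧ v ∈ A))) :
    ((∃ (M : Set (Sym2 V)) (v : V), v ∈ A ∧ IsMatchingSet G M ∧
        (∀ u, CriticalVx M u ↔ u = v) ∧
        ∀ w ∈ A, w ≠ v → ∃ p : G.Walk w v, IsSemiAugmenting M p) →
      ConductingFirst G A B) ∧
    ((∃ M : Set (Sym2 V), IsMatchingSet G M ∧ (∀ u, ¬ CriticalVx M u) ∧
        ∀ v ∈ A, ∀ w ∈ B, ∃ p : G.Walk v w, IsNonAugmenting M p) →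
      ConductingSecond G A B) :=
  statement16_general G A B hdisj hbip
end
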